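/- Let K be a field, n ≥ 3 an odd integer, and R = K[x², xⁿ] ⊆ K[x]. Let I be a nonzero ideal of R and let f be the smallest positive odd integer with x^f I ⊆ I. Then the multiplier ring ϱ(I) = {g ∈ K(x) : gI ⊆ I} equals K[x²] + K[x]x^{f−1}, and Fitt₁(I) = (R : ϱ(I)) = K[x²]x^{n−f} + K[x]x^{n−1}. Moreover R/Fitt₁(I) is isomorphic as a ring to K[x²]/(x^{n−f}). -/

import Mathlib

/-!
The polynomial multipliers of `I` form an `R`-submodule of `K[x]` containing `R`, and such a
submodule is `K[x², xᵉ]` for the least odd `e` with `xᵉ` in it: if an element has odd part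
`xʲ u` with `u` even and `u(0) ≠ 0`, multiplying by an even inverse of `u` modulo `x²ⁿ` puts `xʲ`
in the submodule. Rational multipliers are integral over `K[x]`, hence polynomials, so
`ϱ(I) = K[x², xᶠ]`.

Every element of `Fitt₁(I)` multiplies `ϱ(I)` into `R`, and `(R : K[x², xᶠ]) = xⁿ⁻ᶠ K[x², xᶠ]`
because of the conductor `xⁿ⁻¹ K[x] ⊆ R`. Conversely write `(a, b) = d (a', b')` with `a', b'`
coprime, say `a'(0) ≠ 0`, and let `w` invert `a'` modulo `x²ⁿ`. The conductor lies in `Fitt₁(I)`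
by coprimality, and the least odd exponent `γ` below `n` of `b' w ≡ b'/a'` (or `γ = n`) gives
both `xᵞ ∈ ϱ(I)`, so `f ≤ γ`, and `xⁿ⁻ᵞ ∈ Fitt₁(I)`. Finally `p ↦ p(x²)` induces `K[u]/(u^((n-f)/2)) ≅ R/Fitt₁(I)`.
-/

/-- The second Fitting ideal of a two-generated ideal, computed from the generating pair
`(a, b)`: the ideal generated by all coefficients involved in a relation
`r * a + s * b = 0`. -/
def relFittingIdeal {R : Type*} [CommRing R] (a b : R) : Ideal R :=
  Ideal.span {r : R | (∃ s, r * a + s * b = 0) ∨ (∃ s, s * a + r * b = 0)}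

open Polynomial

namespace Polynomial

section CommRing

variable {K : Type*} [CommRing K]

theorem coeff_expand_contract_two (p : K[X]) (i : ℕ) :
    (expand K 2 (contract 2 p)).coeff i = if Even i then p.coeff i else 0 := by
  rw [coeff_expand two_pos, coeff_contract two_ne_zero]
  simp only [even_iff_two_dvd]
  split_ifs with h
  · rw [Nat.div_mul_cancel h]
  · rfl

theorem expand_contract_two {p : K[X]} (hp : ∀ i, Odd i → p.coeff i = 0) :
    expand K 2 (contract 2 p) = p := by
  ext i
  rw [coeff_expand_contract_two]
  split_ifs with h
  · rfl
  · exact (hp i (Nat.not_even_iff_odd.mp h)).symm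

theorem coeff_mul_eq_zero_of_odd {p q : K[X]} {j : ℕ} (hj : Odd j)
    (hp : ∀ i ≤ j, Odd i → p.coeff i = 0) (hq : ∀ i ≤ j, Odd i → q.coeff i = 0) :
    (p * q).coeff j = 0 := by
  rw [coeff_mul]
  refine Finset.sum_eq_zero fun ⟨i, k⟩ hik => ?_
  rw [Finset.HasAntidiagonal.mem_antidiagonal] at hik
  subst hik
  rcases Nat.even_or_odd i with hi | hi
  · rw [hq k (by omega) ((Nat.odd_add'.mp hj).mpr hi), mul_zero]
  · rw [hp i (by omega) hi, zero_mul]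

variable (K) in
/-- For odd `e` this is `K[x², xᵉ]`, see `adjoin_X_sq_X_pow_eq_cuspAlgebra`. -/
def cuspAlgebra (e : ℕ) : Subalgebra K K[X] where
  carrier := {p | ∀ j < e, Odd j → p.coeff j = 0}
  mul_mem' {p q} hp hq j hj hjo :=
    coeff_mul_eq_zero_of_odd hjo (fun i hi => hp i (by omega)) (fun i hi => hq i (by omega))
  add_mem' {p q} hp hq j hj hjo := by rw [coeff_add, hp j hj hjo, hq j hj hjo, add_zero]
  algebraMap_mem' c j _ hjo := by
    rw [algebraMap_eq, coeff_C, if_neg (by rintro rfl; exact Nat.not_odd_zero hjo)]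

variable {e : ℕ} {p : K[X]}

theorem expand_mem_cuspAlgebra (e : ℕ) (q : K[X]) : expand K 2 q ∈ cuspAlgebra K e :=
  fun _ _ hj => by rw [coeff_expand two_pos, if_neg hj.not_two_dvd_nat]

theorem X_pow_mul_mem_cuspAlgebra {k : ℕ} (h : e ≤ k) (p : K[X]) :
    X ^ k * p ∈ cuspAlgebra K e :=
  fun j hj _ => by rw [coeff_X_pow_mul', if_neg (by omega)]

theorem X_pow_mem_cuspAlgebra_of_le {k : ℕ} (h : e ≤ k) : (X : K[X]) ^ k ∈ cuspAlgebra K e :=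
  mul_one (X ^ k : K[X]) ▸ X_pow_mul_mem_cuspAlgebra h 1

theorem X_pow_mem_cuspAlgebra_of_even {k : ℕ} (hk : Even k) :
    (X : K[X]) ^ k ∈ cuspAlgebra K e :=
  fun j _ hj => by rw [coeff_X_pow, if_neg (by rintro rfl; exact Nat.not_even_iff_odd.mpr hj hk)]

theorem X_pow_mul_mem_cuspAlgebra_iff {k : ℕ} (hk : Even k) {s : K[X]} :
    X ^ k * s ∈ cuspAlgebra K (e + k) ↔ s ∈ cuspAlgebra K e := by
  constructor
  · intro h j hj hjo
    simpa [coeff_X_pow_mul] using h (j + k) (by omega) (hjo.add_even hk)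
  · intro h j hj hjo
    rw [coeff_X_pow_mul']
    split_ifs with hkj
    · exact h (j - k) (by omega) (Nat.Odd.sub_even hkj hjo hk)
    · rfl

theorem X_pow_pred_mul_mem_cuspAlgebra (he : Odd e) (p : K[X]) :
    X ^ (e - 1) * p ∈ cuspAlgebra K e := fun j hj hjo => by
  obtain ⟨k, rfl⟩ := he
  obtain ⟨l, rfl⟩ := hjo
  rw [coeff_X_pow_mul', if_neg (by omega)]

theorem X_pow_pred_dvd_of_forall_X_pow_mul_mem (h : ∀ k, X ^ k * p ∈ cuspAlgebra K e) :
    X ^ (e - 1) ∣ p := by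
  rw [X_pow_dvd_iff]
  intro j hj
  rcases Nat.even_or_odd j with hje | hjo
  · simpa [coeff_X_pow_mul] using h 1 (j + 1) (by omega) hje.add_one
  · simpa using h 0 j (by omega) hjo

theorem X_pow_dvd_sub_expand_contract (hp : p ∈ cuspAlgebra K e) :
    X ^ e ∣ p - expand K 2 (contract 2 p) := by
  rw [X_pow_dvd_iff]
  intro j hj
  rw [coeff_sub, coeff_expand_contract_two]
  split_ifs with h
  · exact sub_self _
  · rw [hp j hj (Nat.not_even_iff_odd.mp h), sub_zero]

theorem exists_eq_expand_add_X_pow_mul_expand (he : Odd e) (hp : p ∈ cuspAlgebra K e) :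
    ∃ q u, p = expand K 2 q + X ^ e * expand K 2 u ∧ u.coeff 0 = p.coeff e := by
  obtain ⟨v, hv⟩ := X_pow_dvd_sub_expand_contract hp
  have hvi : ∀ i, v.coeff i = (p - expand K 2 (contract 2 p)).coeff (e + i) := fun i => by
    rw [hv, add_comm, coeff_X_pow_mul]
  have hvo : ∀ i, Odd i → v.coeff i = 0 := fun i hi => by
    rw [hvi, coeff_sub, coeff_expand_contract_two, if_pos (he.add_odd hi), sub_self]
  refine ⟨contract 2 p, contract 2 v, ?_, ?_⟩
  · rw [expand_contract_two hvo, ← hv]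
    ring
  · rw [coeff_contract two_ne_zero, zero_mul, hvi, add_zero, coeff_sub,
      coeff_expand_contract_two, if_neg (Nat.not_even_iff_odd.mpr he), sub_zero]

theorem exists_odd_le_mem_cuspAlgebra (he : Odd e) (p : K[X]) :
    ∃ j, Odd j ∧ j ≤ e ∧ p ∈ cuspAlgebra K j ∧ (j < e → p.coeff j ≠ 0) := by
  classical
  have hex : ∃ j, Odd j ∧ (j < e → p.coeff j ≠ 0) := ⟨e, he, fun h => absurd h (lt_irrefl e)⟩
  obtain ⟨hjo, hjc⟩ := Nat.find_spec hex
  refine ⟨Nat.find hex, hjo, Nat.find_min' hex ⟨he, fun h => absurd h (lt_irrefl e)⟩,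
    fun i hi hio => ?_, hjc⟩
  by_contra hne
  exact Nat.find_min hex hi ⟨hio, fun _ => hne⟩

theorem mem_cuspAlgebra_iff_exists_comp (he : Odd e) :
    p ∈ cuspAlgebra K e ↔ ∃ q s : K[X], p = q.comp (X ^ 2) + X ^ (e - 1) * s := by
  constructor
  · intro hp
    obtain ⟨q, u, rfl, -⟩ := exists_eq_expand_add_X_pow_mul_expand he hp
    refine ⟨q, X * expand K 2 u, ?_⟩
    rw [← expand_eq_comp_X_pow, ← mul_assoc, ← pow_succ, Nat.sub_add_cancel he.pos]
  · rintro ⟨q, s, rfl⟩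
    exact add_mem (expand_mem_cuspAlgebra e q) (X_pow_pred_mul_mem_cuspAlgebra he s)

theorem adjoin_X_sq_X_pow_eq_cuspAlgebra (he : Odd e) :
    Algebra.adjoin K {(X : K[X]) ^ 2, X ^ e} = cuspAlgebra K e := by
  apply le_antisymm
  · rw [Algebra.adjoin_le_iff]
    rintro _ (rfl | rfl)
    · exact X_pow_mem_cuspAlgebra_of_even even_two
    · exact X_pow_mem_cuspAlgebra_of_le le_rfl
  · intro p hp
    obtain ⟨q, u, rfl, -⟩ := exists_eq_expand_add_X_pow_mul_expand he hp
    have hexp : ∀ r : K[X], expand K 2 r ∈ Algebra.adjoin K {(X : K[X]) ^ 2, X ^ e} := fun r =>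
      Algebra.adjoin_mono (Set.singleton_subset_iff.mpr (Set.mem_insert _ _))
        (aeval_mem_adjoin_singleton K (X ^ 2))
    exact add_mem (hexp q) (mul_mem (Algebra.subset_adjoin (by simp)) (hexp u))

end CommRing

end Polynomial

section Multipliers

variable {K A : Type*} [CommRing K] [CommRing A] [Algebra K A] {R : Subalgebra K A}

theorem Submodule.mul_mem_of_mem_subalgebra {M : Submodule R A} {p x : A} (hp : p ∈ R)
    (hx : x ∈ M) : p * x ∈ M :=
  M.smul_mem ⟨p, hp⟩ hx

theorem Ideal.mem_map_linearMap_iff {I : Ideal R} {x : A} :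
    x ∈ Submodule.map (Algebra.linearMap R A) I ↔ ∃ z ∈ I, (z : A) = x := by
  simp [Submodule.mem_map, eq_comm]

/-- The part `ϱ(I) ∩ A` of the multiplier ring of `I`. -/
def Ideal.multipliers (I : Ideal R) : Submodule R A where
  carrier := {P | ∀ y ∈ I, ∃ z ∈ I, (z : A) = P * y}
  add_mem' {P Q} hP hQ y hy := by
    obtain ⟨z, hz, e⟩ := hP y hy
    obtain ⟨z', hz', e'⟩ := hQ y hy
    exact ⟨z + z', I.add_mem hz hz', by simp [e, e', add_mul]⟩
  zero_mem' y _ := ⟨0, I.zero_mem, by simp⟩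
  smul_mem' r P hP y hy := by
    obtain ⟨z, hz, e⟩ := hP y hy
    exact ⟨r * z, I.mul_mem_left r hz, by simp [e, Subalgebra.smul_def, mul_assoc]⟩

theorem Ideal.mem_multipliers_of_mem {I : Ideal R} {p : A} (hp : p ∈ R) : p ∈ I.multipliers :=
  fun y hy => ⟨⟨p, hp⟩ * y, I.mul_mem_left _ hy, rfl⟩

theorem Ideal.mem_multipliers_span_pair {a b : R} {P : A}
    (ha : P * a ∈ Submodule.map (Algebra.linearMap R A) (Ideal.span {a, b}))
    (hb : P * b ∈ Submodule.map (Algebra.linearMap R A) (Ideal.span {a, b})) :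
    P ∈ (Ideal.span {a, b}).multipliers := by
  intro y hy
  obtain ⟨r, s, rfl⟩ := Ideal.mem_span_pair.mp hy
  have : P * ↑(r * a + s * b) = (r : A) * (P * a) + (s : A) * (P * b) := by push_cast; ring
  rw [← Ideal.mem_map_linearMap_iff, this]
  exact add_mem (Submodule.mul_mem_of_mem_subalgebra r.2 ha)
    (Submodule.mul_mem_of_mem_subalgebra s.2 hb)

theorem Ideal.coe_ne_zero_or_of_span_pair_ne_bot {a b : R} (h : Ideal.span {a, b} ≠ ⊥) :
    (a : A) ≠ 0 ∨ (b : A) ≠ 0 := by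
  by_contra! h0
  obtain ⟨ha, hb⟩ : a = 0 ∧ b = 0 := ⟨Subtype.ext h0.1, Subtype.ext h0.2⟩
  exact h (by simp [ha, hb])

end Multipliers

section FittingGeneral

variable {K A : Type*} [CommRing K] [CommRing A] [Algebra K A] {R : Subalgebra K A}

theorem relFittingIdeal_comm {S : Type*} [CommRing S] (a b : S) :
    relFittingIdeal a b = relFittingIdeal b a := by
  unfold relFittingIdeal
  simp only [add_comm (_ * b), or_comm]

theorem mem_relFittingIdeal_of_eq_mul {a b r : R} {d a' b' t : A} (ha : (a : A) = d * a')
    (hb : (b : A) = d * b') (hr : (r : A) = a' * t) (ht : b' * t ∈ R) :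
    r ∈ relFittingIdeal a b :=
  Ideal.subset_span <| Or.inr ⟨-⟨b' * t, ht⟩, Subtype.ext <| by push_cast; rw [ha, hb, hr]; ring⟩

theorem mul_mem_of_mul_add_mul_eq_zero [IsDomain A] {a b r s : R}
    (hab : (a : A) ≠ 0 ∨ (b : A) ≠ 0) (hrs : r * a + s * b = 0) {P : A}
    (hP : P ∈ (Ideal.span {a, b}).multipliers) : P * r ∈ R := by
  have hrs' : (r : A) * a + s * b = 0 := by exact_mod_cast congrArg Subtype.val hrs
  rcases eq_or_ne (b : A) 0 with hb | hb
  · have ha : (a : A) ≠ 0 := hab.resolve_right (not_not.mpr hb)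
    rw [hb, mul_zero, add_zero, mul_eq_zero, or_iff_left ha] at hrs'
    simp [hrs']
  · obtain ⟨z, hz, hzb⟩ := hP b (Ideal.subset_span (by simp))
    obtain ⟨α, β, rfl⟩ := Ideal.mem_span_pair.mp hz
    push_cast at hzb
    have : P * r = ↑(β * r - α * s) := mul_right_cancel₀ hb <| by
      push_cast
      linear_combination -(r : A) * hzb + (α : A) * hrs'
    rw [this]
    exact SetLike.coe_mem _

end FittingGeneral

section Classification

variable {K : Type*} [Field K]

theorem X_pow_mul_mem_of_X_pow_mul_expand_mul_mem {n : ℕ}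
    {M : Submodule (cuspAlgebra K n) K[X]} {m u : K[X]} (j : ℕ) (hm : m ∈ M)
    (hu : u.coeff 0 ≠ 0) (h : X ^ j * expand K 2 u * m ∈ M) : X ^ j * m ∈ M := by
  obtain ⟨α, β, hαβ⟩ := (irreducible_X (R := K)).coprime_pow_of_not_dvd n (by rwa [X_dvd_iff])
  have hαβ' := congrArg (expand K 2) hαβ
  simp only [map_add, map_mul, map_pow, expand_X, map_one] at hαβ'
  have : X ^ j * m = expand K 2 α * (X ^ j * expand K 2 u * m) +
      X ^ (j + 2 * n) * expand K 2 β * m := by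
    linear_combination (-(X ^ j * m)) * hαβ'
  rw [this]
  exact add_mem (Submodule.mul_mem_of_mem_subalgebra (expand_mem_cuspAlgebra n α) h)
    (Submodule.mul_mem_of_mem_subalgebra (X_pow_mul_mem_cuspAlgebra (by omega) _) hm)

theorem le_of_X_pow_mem_cuspAlgebra {e j : ℕ} (hj : Odd j)
    (h : (X : K[X]) ^ j ∈ cuspAlgebra K e) : e ≤ j := by
  by_contra hlt
  simpa using h j (by omega) hj

theorem mem_iff_mem_cuspAlgebra_of_minimal {n e : ℕ} (he : Odd e)
    {M : Submodule (cuspAlgebra K n) K[X]} (h1 : 1 ∈ M) (hXe : X ^ e ∈ M)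
    (hmin : ∀ j, Odd j → X ^ j ∈ M → e ≤ j) (p : K[X]) :
    p ∈ M ↔ p ∈ cuspAlgebra K e := by
  constructor
  · intro hp
    obtain ⟨j, hj, hje, hpj, hpj0⟩ := exists_odd_le_mem_cuspAlgebra he p
    obtain rfl | hlt := hje.eq_or_lt
    · exact hpj
    obtain ⟨q, u, hqu, hu⟩ := exists_eq_expand_add_X_pow_mul_expand hj hpj
    have hXj : X ^ j * 1 ∈ M := by
      refine X_pow_mul_mem_of_X_pow_mul_expand_mul_mem j h1 (hu ▸ hpj0 hlt) ?_
      rw [mul_one, show X ^ j * expand K 2 u = p - expand K 2 q * 1 by rw [hqu]; ring]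
      exact sub_mem hp (Submodule.mul_mem_of_mem_subalgebra (expand_mem_cuspAlgebra n q) h1)
    exact absurd (hmin j hj (by simpa using hXj)) (by omega)
  · intro hp
    obtain ⟨q, u, rfl, -⟩ := exists_eq_expand_add_X_pow_mul_expand he hp
    rw [← mul_one (expand K 2 q), mul_comm (X ^ e)]
    exact add_mem (Submodule.mul_mem_of_mem_subalgebra (expand_mem_cuspAlgebra n q) h1)
      (Submodule.mul_mem_of_mem_subalgebra (expand_mem_cuspAlgebra n u) hXe)

end Classification

section RatFunc

variable {K : Type*} [Field K] {R : Subalgebra K K[X]}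

/-- `g ∈ ϱ(I)`. -/
def Ideal.IsRatMultiplier (I : Ideal R) (g : RatFunc K) : Prop :=
  ∀ y ∈ I, ∃ z ∈ I, g * algebraMap K[X] (RatFunc K) y = algebraMap K[X] (RatFunc K) z

theorem exists_algebraMap_eq_of_isRatMultiplier {a b : R} (hab : Ideal.span {a, b} ≠ ⊥)
    {g : RatFunc K} (hg : (Ideal.span {a, b}).IsRatMultiplier g) :
    ∃ P : K[X], algebraMap K[X] (RatFunc K) P = g := by
  set N := Submodule.span K[X] {algebraMap K[X] (RatFunc K) a, algebraMap K[X] (RatFunc K) b}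
  have hIN : ∀ y ∈ Ideal.span {a, b}, algebraMap K[X] (RatFunc K) y ∈ N := by
    intro y hy
    obtain ⟨r, s, rfl⟩ := Ideal.mem_span_pair.mp hy
    simp only [Subalgebra.coe_add, Subalgebra.coe_mul, map_add, map_mul, ← Algebra.smul_def]
    exact add_mem (N.smul_mem _ (Submodule.subset_span (by simp)))
      (N.smul_mem _ (Submodule.subset_span (by simp)))
  have hN : N ≠ ⊥ := by
    obtain ⟨y, hy, hy0⟩ := Submodule.exists_mem_ne_zero_of_ne_bot hab
    refine (Submodule.ne_bot_iff N).mpr ⟨_, hIN y hy, ?_⟩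
    rwa [ne_eq, map_eq_zero_iff _ (IsFractionRing.injective K[X] (RatFunc K)),
      ZeroMemClass.coe_eq_zero]
  refine IsIntegrallyClosed.isIntegral_iff.mp
    (isIntegral_of_smul_mem_submodule N hN (Submodule.fg_span (by simp)) g fun m hm => ?_)
  induction hm using Submodule.span_induction with
  | mem m hm =>
    obtain ⟨y, hy, rfl⟩ : ∃ y ∈ ({a, b} : Set R), algebraMap K[X] (RatFunc K) y = m := by
      rcases hm with rfl | rfl <;> simp
    obtain ⟨z, hz, hgz⟩ := hg y (Ideal.subset_span hy)
    rw [smul_eq_mul, hgz]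
    exact hIN z hz
  | zero => simp
  | add m m' _ _ h h' => rw [smul_add]; exact add_mem h h'
  | smul p m _ h => rw [smul_comm]; exact N.smul_mem p h

theorem isRatMultiplier_iff {a b : R} (hab : Ideal.span {a, b} ≠ ⊥) (g : RatFunc K) :
    (Ideal.span {a, b}).IsRatMultiplier g ↔
      ∃ P ∈ (Ideal.span {a, b}).multipliers, algebraMap K[X] (RatFunc K) P = g := by
  constructor
  · intro hg
    obtain ⟨P, rfl⟩ := exists_algebraMap_eq_of_isRatMultiplier hab hg
    refine ⟨P, fun y hy => ?_, rfl⟩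
    obtain ⟨z, hz, hPz⟩ := hg y hy
    exact ⟨z, hz, IsFractionRing.injective K[X] (RatFunc K) (by rw [map_mul, hPz])⟩
  · rintro ⟨P, hP, rfl⟩ y hy
    obtain ⟨z, hz, hPz⟩ := hP y hy
    exact ⟨z, hz, by rw [← map_mul, hPz]⟩

variable {a b : R} (hab : Ideal.span {a, b} ≠ ⊥)
include hab

theorem isRatMultiplier_iff_exists_comp {f : ℕ} (hf : Odd f)
    (hM : ∀ P, P ∈ (Ideal.span {a, b}).multipliers ↔ P ∈ cuspAlgebra K f) (g : RatFunc K) :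
    (Ideal.span {a, b}).IsRatMultiplier g ↔ ∃ p q : K[X],
      g = algebraMap K[X] (RatFunc K) (p.comp (X ^ 2) + X ^ (f - 1) * q) := by
  rw [isRatMultiplier_iff hab]
  simp_rw [hM, mem_cuspAlgebra_iff_exists_comp hf]
  constructor
  · rintro ⟨P, ⟨p, q, rfl⟩, rfl⟩
    exact ⟨p, q, rfl⟩
  · rintro ⟨p, q, rfl⟩
    exact ⟨_, ⟨p, q, rfl⟩, rfl⟩

theorem forall_mul_mem_iff_forall_isRatMultiplier {S : Subalgebra K K[X]}
    (hS : ∀ P, P ∈ (Ideal.span {a, b}).multipliers ↔ P ∈ S) (r : K[X]) :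
    (∀ P ∈ S, P * r ∈ R) ↔ ∀ g, (Ideal.span {a, b}).IsRatMultiplier g →
      ∃ s : R, g * algebraMap K[X] (RatFunc K) r = algebraMap K[X] (RatFunc K) s := by
  simp_rw [isRatMultiplier_iff hab, hS]
  constructor
  · rintro h g ⟨P, hP, rfl⟩
    exact ⟨⟨_, h P hP⟩, (map_mul _ _ _).symm⟩
  · intro h P hP
    obtain ⟨s, hs⟩ := h _ ⟨P, hP, rfl⟩
    rw [← map_mul] at hs
    rw [IsFractionRing.injective K[X] (RatFunc K) hs]
    exact s.2

end RatFunc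

section Colon

variable {K : Type*} [Field K] {n f : ℕ}

theorem exists_mem_cuspAlgebra_eq_X_pow_sub_mul (hn : Odd n) (hf : Odd f) (hfn : f ≤ n)
    {r : K[X]} (hr : r ∈ cuspAlgebra K n) (h : X ^ (n - f) ∣ r) :
    ∃ s ∈ cuspAlgebra K f, r = X ^ (n - f) * s := by
  obtain ⟨s, rfl⟩ := h
  refine ⟨s, (X_pow_mul_mem_cuspAlgebra_iff (Nat.Odd.sub_odd hn hf)).mp ?_, rfl⟩
  rwa [Nat.add_sub_cancel' hfn]

theorem forall_mul_mem_cuspAlgebra_iff (hn : Odd n) (hf : Odd f) (hfn : f ≤ n) {r : K[X]}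
    (hr : r ∈ cuspAlgebra K n) :
    (∀ P ∈ cuspAlgebra K f, P * r ∈ cuspAlgebra K n) ↔ X ^ (n - f) ∣ r := by
  have := hf.pos
  constructor
  · intro h
    have : X ^ (f - 1) * X ^ (n - f) ∣ X ^ (f - 1) * r := by
      rw [← pow_add, show f - 1 + (n - f) = n - 1 by omega]
      refine X_pow_pred_dvd_of_forall_X_pow_mul_mem fun k => ?_
      rw [mul_left_comm, ← mul_assoc]
      exact h _ (X_pow_pred_mul_mem_cuspAlgebra hf _)
    exact (mul_dvd_mul_iff_left (pow_ne_zero _ X_ne_zero)).mp this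
  · intro h P hP
    obtain ⟨s, hs, rfl⟩ := exists_mem_cuspAlgebra_eq_X_pow_sub_mul hn hf hfn hr h
    have := (X_pow_mul_mem_cuspAlgebra_iff (Nat.Odd.sub_odd hn hf)).mpr (mul_mem hP hs)
    rwa [Nat.add_sub_cancel' hfn, mul_left_comm] at this

theorem X_pow_sub_dvd_iff_exists_comp (hn : Odd n) (hf : Odd f) (hfn : f ≤ n) {r : K[X]}
    (hr : r ∈ cuspAlgebra K n) :
    X ^ (n - f) ∣ r ↔ ∃ p q : K[X], r = X ^ (n - f) * p.comp (X ^ 2) + X ^ (n - 1) * q := by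
  have hpow : (X : K[X]) ^ (n - f) * X ^ (f - 1) = X ^ (n - 1) := by
    rw [← pow_add]; congr 1; have := hf.pos; omega
  constructor
  · intro h
    obtain ⟨s, hs, rfl⟩ := exists_mem_cuspAlgebra_eq_X_pow_sub_mul hn hf hfn hr h
    obtain ⟨p, q, rfl⟩ := (mem_cuspAlgebra_iff_exists_comp hf).mp hs
    exact ⟨p, q, by rw [← hpow]; ring⟩
  · rintro ⟨p, q, rfl⟩
    exact ⟨p.comp (X ^ 2) + X ^ (f - 1) * q, by rw [← hpow]; ring⟩

end Colon

section FittingCusp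

variable {K : Type*} [Field K] {n f : ℕ} {a b : cuspAlgebra K n} {d a' b' : K[X]}

theorem exists_eq_mul_isCoprime {p q : K[X]} (hpq : p ≠ 0 ∨ q ≠ 0) :
    ∃ d p' q', p = d * p' ∧ q = d * q' ∧ IsCoprime p' q' := by
  classical
  have hd : gcd p q ≠ 0 := hpq.elim gcd_ne_zero_of_left gcd_ne_zero_of_right
  exact ⟨gcd p q, p / gcd p q, q / gcd p q,
    (EuclideanDomain.mul_div_cancel' hd (gcd_dvd_left _ _)).symm,
    (EuclideanDomain.mul_div_cancel' hd (gcd_dvd_right _ _)).symm,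
    isCoprime_div_gcd_div_gcd_of_gcd_ne_zero hd⟩

theorem IsCoprime.coeff_zero_ne_zero_or {p q : K[X]} (h : IsCoprime p q) :
    p.coeff 0 ≠ 0 ∨ q.coeff 0 ≠ 0 := by
  by_contra! h0
  exact not_isUnit_X (h.isUnit_of_dvd' (X_dvd_iff.mpr h0.1) (X_dvd_iff.mpr h0.2))

theorem mem_relFittingIdeal_of_X_pow_pred_dvd (hn : Odd n) (ha : (a : K[X]) = d * a')
    (hb : (b : K[X]) = d * b') (hcop : IsCoprime a' b') {r : cuspAlgebra K n}
    (hr : X ^ (n - 1) ∣ (r : K[X])) : r ∈ relFittingIdeal a b := by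
  obtain ⟨u, v, huv⟩ := hcop
  obtain ⟨q, hq⟩ := hr
  have hmem : ∀ c p : K[X], c * (X ^ (n - 1) * p) ∈ cuspAlgebra K n := fun c p => by
    rw [mul_left_comm]; exact X_pow_pred_mul_mem_cuspAlgebra hn _
  have hsplit : r = ⟨a' * (X ^ (n - 1) * (q * u)), hmem _ _⟩ +
      ⟨b' * (X ^ (n - 1) * (q * v)), hmem _ _⟩ :=
    Subtype.ext <| by push_cast; rw [hq]; linear_combination (-(X ^ (n - 1) * q)) * huv
  rw [hsplit]
  refine add_mem (mem_relFittingIdeal_of_eq_mul ha hb rfl (hmem _ _)) ?_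
  rw [relFittingIdeal_comm]
  exact mem_relFittingIdeal_of_eq_mul hb ha rfl (hmem _ _)

theorem exists_mem_relFittingIdeal_coe_eq_X_pow (hn : Odd n) (ha : (a : K[X]) = d * a')
    (hb : (b : K[X]) = d * b') (hcop : IsCoprime a' b') {w e : K[X]}
    (hw : w * a' + e * X ^ (2 * n) = 1) {γ : ℕ} (hγ : Odd γ) (hγn : γ ≤ n)
    (hc : b' * w ∈ cuspAlgebra K γ) :
    ∃ r ∈ relFittingIdeal a b, (r : K[X]) = X ^ (n - γ) := by
  have hγn' : Even (n - γ) := Nat.Odd.sub_odd hn hγ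
  have hbt : b' * (w * X ^ (n - γ)) ∈ cuspAlgebra K n := by
    have := (X_pow_mul_mem_cuspAlgebra_iff hγn').mpr hc
    rwa [Nat.add_sub_cancel' hγn, mul_comm, mul_assoc] at this
  have hpow : (X : K[X]) ^ (n - γ) * X ^ (2 * n) = X ^ (n - 1) * X ^ (2 * n + 1 - γ) := by
    rw [← pow_add, ← pow_add]; congr 1; have := hn.pos; omega
  have hat : a' * (w * X ^ (n - γ)) =
      X ^ (n - γ) - X ^ (n - 1) * (X ^ (2 * n + 1 - γ) * e) := by
    linear_combination X ^ (n - γ) * hw - e * hpow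
  have hat_mem : a' * (w * X ^ (n - γ)) ∈ cuspAlgebra K n := by
    rw [hat]
    exact sub_mem (X_pow_mem_cuspAlgebra_of_even hγn') (X_pow_pred_mul_mem_cuspAlgebra hn _)
  refine ⟨⟨_, hat_mem⟩ + ⟨_, X_pow_pred_mul_mem_cuspAlgebra hn (X ^ (2 * n + 1 - γ) * e)⟩,
    add_mem (mem_relFittingIdeal_of_eq_mul ha hb rfl hbt)
      (mem_relFittingIdeal_of_X_pow_pred_dvd hn ha hb hcop (dvd_mul_right _ _)), ?_⟩
  push_cast
  rw [hat]
  ring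

theorem X_pow_mem_multipliers_of_eq_expand_add (ha : (a : K[X]) = d * a')
    (hb : (b : K[X]) = d * b') {w e : K[X]} (hw : w * a' + e * X ^ (2 * n) = 1) {γ : ℕ}
    {q u : K[X]} (hc : b' * w = expand K 2 q + X ^ γ * expand K 2 u) (hu : u.coeff 0 ≠ 0) :
    X ^ γ ∈ (Ideal.span {a, b}).multipliers := by
  set I := Submodule.map (Algebra.linearMap (cuspAlgebra K n) K[X]) (Ideal.span {a, b})
  have haI : (a : K[X]) ∈ I :=
    Ideal.mem_map_linearMap_iff.mpr ⟨a, Ideal.subset_span (by simp), rfl⟩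
  have hbI : (b : K[X]) ∈ I :=
    Ideal.mem_map_linearMap_iff.mpr ⟨b, Ideal.subset_span (by simp), rfl⟩
  have hexp : ∀ p : K[X], expand K 2 p ∈ cuspAlgebra K n := expand_mem_cuspAlgebra n
  have hua : X ^ γ * expand K 2 u * (a : K[X]) ∈ I := by
    have : X ^ γ * expand K 2 u * (a : K[X]) =
        (1 - X ^ (2 * n) * e) * (b : K[X]) - expand K 2 q * (a : K[X]) := by
      rw [ha, hb]; linear_combination -(d * a') * hc + d * b' * hw
    rw [this]
    exact sub_mem (Submodule.mul_mem_of_mem_subalgebra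
        (sub_mem (one_mem _) (X_pow_mul_mem_cuspAlgebra (by omega) _)) hbI)
      (Submodule.mul_mem_of_mem_subalgebra (hexp q) haI)
  have hXa : X ^ γ * (a : K[X]) ∈ I := X_pow_mul_mem_of_X_pow_mul_expand_mul_mem γ haI hu hua
  have hXb : X ^ γ * (b : K[X]) ∈ I := by
    have : X ^ γ * (b : K[X]) = expand K 2 q * (X ^ γ * (a : K[X])) +
        X ^ (2 * γ) * expand K 2 u * (a : K[X]) + X ^ (γ + 2 * n) * e * (b : K[X]) := by
      rw [ha, hb]; linear_combination X ^ γ * d * a' * hc - X ^ γ * d * b' * hw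
    rw [this]
    refine add_mem (add_mem (Submodule.mul_mem_of_mem_subalgebra (hexp q) hXa) ?_) ?_
    · exact Submodule.mul_mem_of_mem_subalgebra
        (mul_mem (X_pow_mem_cuspAlgebra_of_even (even_two_mul γ)) (hexp u)) haI
    · exact Submodule.mul_mem_of_mem_subalgebra (X_pow_mul_mem_cuspAlgebra (by omega) _) hbI
  exact Ideal.mem_multipliers_span_pair hXa hXb

theorem exists_X_pow_mem_multipliers_and_mem_relFittingIdeal (hn : Odd n)
    (ha : (a : K[X]) = d * a') (hb : (b : K[X]) = d * b') (hcop : IsCoprime a' b')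
    (ha' : a'.coeff 0 ≠ 0) :
    ∃ γ, Odd γ ∧ γ ≤ n ∧ X ^ γ ∈ (Ideal.span {a, b}).multipliers ∧
      ∃ r ∈ relFittingIdeal a b, (r : K[X]) = X ^ (n - γ) := by
  obtain ⟨w, e, hw⟩ := (irreducible_X (R := K)).coprime_pow_of_not_dvd (2 * n)
    (by rwa [X_dvd_iff])
  obtain ⟨γ, hγ, hγn, hcγ, hγ0⟩ := exists_odd_le_mem_cuspAlgebra hn (b' * w)
  refine ⟨γ, hγ, hγn, ?_,
    exists_mem_relFittingIdeal_coe_eq_X_pow hn ha hb hcop hw hγ hγn hcγ⟩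
  rcases hγn.lt_or_eq with hlt | rfl
  · obtain ⟨q, u, hqu, hu⟩ := exists_eq_expand_add_X_pow_mul_expand hγ hcγ
    exact X_pow_mem_multipliers_of_eq_expand_add ha hb hw hqu (hu ▸ hγ0 hlt)
  · exact Ideal.mem_multipliers_of_mem (X_pow_mem_cuspAlgebra_of_le le_rfl)

variable (hn : Odd n) (hf : Odd f) (hfn : f ≤ n) (hab : (a : K[X]) ≠ 0 ∨ (b : K[X]) ≠ 0)
  (hM : ∀ P, P ∈ (Ideal.span {a, b}).multipliers ↔ P ∈ cuspAlgebra K f)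
include hn hf hfn hab hM

theorem X_pow_sub_dvd_of_mem_relFittingIdeal {r : cuspAlgebra K n}
    (hr : r ∈ relFittingIdeal a b) : X ^ (n - f) ∣ (r : K[X]) := by
  suffices relFittingIdeal a b ≤ (Ideal.span {X ^ (n - f)}).comap (cuspAlgebra K n).val by
    simpa [Ideal.mem_span_singleton] using this hr
  refine Ideal.span_le.mpr fun r hr => ?_
  rw [SetLike.mem_coe, Ideal.mem_comap, Ideal.mem_span_singleton]
  change X ^ (n - f) ∣ (r : K[X])
  rw [← forall_mul_mem_cuspAlgebra_iff hn hf hfn r.2]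
  intro P hP
  rcases hr with ⟨s, hs⟩ | ⟨s, hs⟩
  · exact mul_mem_of_mul_add_mul_eq_zero hab hs ((hM P).mpr hP)
  · rw [← hM, Ideal.span_pair_comm] at hP
    exact mul_mem_of_mul_add_mul_eq_zero hab.symm
      (show r * b + s * a = 0 by linear_combination hs) hP

theorem mem_relFittingIdeal_of_X_pow_sub_dvd {r : cuspAlgebra K n}
    (hr : X ^ (n - f) ∣ (r : K[X])) : r ∈ relFittingIdeal a b := by
  obtain ⟨d, a', b', ha, hb, hcop⟩ := exists_eq_mul_isCoprime hab
  obtain ⟨γ, hγ, hγn, hXγ, r₀, hr₀, hr₀X⟩ : ∃ γ, Odd γ ∧ γ ≤ n ∧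
      X ^ γ ∈ (Ideal.span {a, b}).multipliers ∧
      ∃ r ∈ relFittingIdeal a b, (r : K[X]) = X ^ (n - γ) := by
    rcases hcop.coeff_zero_ne_zero_or with ha' | hb'
    · exact exists_X_pow_mem_multipliers_and_mem_relFittingIdeal hn ha hb hcop ha'
    · rw [Ideal.span_pair_comm, relFittingIdeal_comm]
      exact exists_X_pow_mem_multipliers_and_mem_relFittingIdeal hn hb ha hcop.symm hb'
  have hfγ : f ≤ γ := le_of_X_pow_mem_cuspAlgebra hγ ((hM _).mp hXγ)
  obtain ⟨p, q, hpq⟩ := (X_pow_sub_dvd_iff_exists_comp hn hf hfn r.2).mp hr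
  have hsplit : r = ⟨p.comp (X ^ 2), expand_mem_cuspAlgebra n p⟩ *
      (⟨X ^ (γ - f), X_pow_mem_cuspAlgebra_of_even (Nat.Odd.sub_odd hγ hf)⟩ * r₀) +
      ⟨X ^ (n - 1) * q, X_pow_pred_mul_mem_cuspAlgebra hn q⟩ := by
    refine Subtype.ext ?_
    push_cast
    rw [hpq, hr₀X, ← pow_add, show γ - f + (n - γ) = n - f by omega]
    ring
  rw [hsplit]
  exact add_mem (Ideal.mul_mem_left _ _ (Ideal.mul_mem_left _ _ hr₀))
    (mem_relFittingIdeal_of_X_pow_pred_dvd hn ha hb hcop (dvd_mul_right _ _))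

theorem mem_relFittingIdeal_iff (r : cuspAlgebra K n) :
    r ∈ relFittingIdeal a b ↔ X ^ (n - f) ∣ (r : K[X]) :=
  ⟨X_pow_sub_dvd_of_mem_relFittingIdeal hn hf hfn hab hM,
    mem_relFittingIdeal_of_X_pow_sub_dvd hn hf hfn hab hM⟩

end FittingCusp

section Quotient

variable {K : Type*} [Field K]

theorem X_pow_dvd_expand_iff {m : ℕ} {p : K[X]} : X ^ (2 * m) ∣ expand K 2 p ↔ X ^ m ∣ p := by
  have hX : (X : K[X]) ^ (2 * m) = expand K 2 (X ^ m) := by rw [map_pow, expand_X, ← pow_mul]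
  rw [hX]
  refine ⟨fun ⟨h, hh⟩ => ⟨contract 2 h, ?_⟩, map_dvd (expand K 2)⟩
  have := congrArg (contract 2) hh
  rwa [contract_expand 2 two_ne_zero, mul_comm, contract_mul_expand two_ne_zero, mul_comm] at this

noncomputable def cuspAlgebraQuotientEquiv {n m : ℕ} (hm : 2 * m ≤ n)
    (J : Ideal (cuspAlgebra K n)) (hJ : ∀ r, r ∈ J ↔ X ^ (2 * m) ∣ (r : K[X])) :
    (cuspAlgebra K n ⧸ J) ≃+* K[X] ⧸ Ideal.span {(X : K[X]) ^ m} :=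
  let ψ : K[X] →+* cuspAlgebra K n ⧸ J :=
    (Ideal.Quotient.mk J).comp ((expand K 2).codRestrict _ (expand_mem_cuspAlgebra n)).toRingHom
  have hker : RingHom.ker ψ = Ideal.span {X ^ m} := by
    ext p
    rw [RingHom.mem_ker]
    change Ideal.Quotient.mk J _ = 0 ↔ _
    rw [Ideal.Quotient.eq_zero_iff_mem, hJ, Ideal.mem_span_singleton]
    exact X_pow_dvd_expand_iff
  have hsurj : Function.Surjective ψ := by
    intro x
    obtain ⟨r, rfl⟩ := Ideal.Quotient.mk_surjective x
    refine ⟨contract 2 r, Ideal.Quotient.eq.mpr ((hJ _).mpr ?_)⟩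
    exact (pow_dvd_pow X hm).trans (dvd_sub_comm.mp (X_pow_dvd_sub_expand_contract r.2))
  (RingHom.quotientKerEquivOfSurjective hsurj).symm.trans (Ideal.quotEquivOfEq hker)

end Quotient

theorem cusp_curve_fitting_general (K : Type*) [Field K] (n : ℕ) (hodd : Odd n)
    (R : Subalgebra K (Polynomial K))
    (hR : R = Algebra.adjoin K {(Polynomial.X : Polynomial K) ^ 2, Polynomial.X ^ n})
    (I : Ideal R) (hI : I ≠ ⊥)
    (a b : R) (hab : I = Ideal.span {a, b})
    (f : ℕ) (hfodd : Odd f)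
    (hfI : ∀ y : R, y ∈ I → ∃ z : R, z ∈ I ∧
      (z : Polynomial K) = Polynomial.X ^ f * (y : Polynomial K))
    (hfmin : ∀ g : ℕ, 0 < g → Odd g →
      (∀ y : R, y ∈ I → ∃ z : R, z ∈ I ∧
        (z : Polynomial K) = Polynomial.X ^ g * (y : Polynomial K)) → f ≤ g) :
    (∀ g : RatFunc K,
      (∀ y : R, y ∈ I → ∃ z : R, z ∈ I ∧
          g * algebraMap (Polynomial K) (RatFunc K) (y : Polynomial K) =
            algebraMap (Polynomial K) (RatFunc K) (z : Polynomial K)) ↔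
        ∃ p q : Polynomial K, g = algebraMap (Polynomial K) (RatFunc K)
          (p.comp (Polynomial.X ^ 2) + Polynomial.X ^ (f - 1) * q)) ∧
    (∀ r : R, r ∈ relFittingIdeal a b ↔
      ∃ p q : Polynomial K, (r : Polynomial K) =
        Polynomial.X ^ (n - f) * p.comp (Polynomial.X ^ 2) +
          Polynomial.X ^ (n - 1) * q) ∧
    (∀ r : R, r ∈ relFittingIdeal a b ↔
      ∀ g : RatFunc K,
        (∀ y : R, y ∈ I → ∃ z : R, z ∈ I ∧
            g * algebraMap (Polynomial K) (RatFunc K) (y : Polynomial K) =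
              algebraMap (Polynomial K) (RatFunc K) (z : Polynomial K)) →
        ∃ s : R, g * algebraMap (Polynomial K) (RatFunc K) (r : Polynomial K) =
          algebraMap (Polynomial K) (RatFunc K) (s : Polynomial K)) ∧
    Nonempty ((R ⧸ relFittingIdeal a b) ≃+*
      (Polynomial K ⧸ Ideal.span {(Polynomial.X : Polynomial K) ^ ((n - f) / 2)})) := by
  obtain rfl : R = cuspAlgebra K n := hR.trans (adjoin_X_sq_X_pow_eq_cuspAlgebra hodd)
  subst hab
  have hM : ∀ P, P ∈ (Ideal.span {a, b}).multipliers ↔ P ∈ cuspAlgebra K f :=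
    mem_iff_mem_cuspAlgebra_of_minimal hfodd (Ideal.mem_multipliers_of_mem (one_mem _)) hfI
      fun j hj => hfmin j hj.pos hj
  have hfn : f ≤ n :=
    hfmin n hodd.pos hodd (Ideal.mem_multipliers_of_mem (X_pow_mem_cuspAlgebra_of_le le_rfl))
  have hFitt := mem_relFittingIdeal_iff hodd hfodd hfn
    (Ideal.coe_ne_zero_or_of_span_pair_ne_bot hI) hM
  refine ⟨isRatMultiplier_iff_exists_comp hI hfodd hM,
    fun r => (hFitt r).trans (X_pow_sub_dvd_iff_exists_comp hodd hfodd hfn r.2),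
    fun r => (hFitt r).trans <| (forall_mul_mem_cuspAlgebra_iff hodd hfodd hfn r.2).symm.trans
      (forall_mul_mem_iff_forall_isRatMultiplier hI hM r),
    ⟨cuspAlgebraQuotientEquiv (m := (n - f) / 2) (by omega) _ fun r => ?_⟩⟩
  rw [hFitt, Nat.two_mul_div_two_of_even (Nat.Odd.sub_odd hodd hfodd)]

set_option synthInstance.maxHeartbeats 1000000 in
set_option maxHeartbeats 1000000 in
/-- Let `K` be a field, `n ≥ 3` odd, `R = K[x², xⁿ] ⊆ K[x]`, `I` a
nonzero ideal of `R` (with generating pair `(a, b)`) and `f` the smallest positive odd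
integer with `x^f I ⊆ I`.  Then `ϱ(I) = K[x²] + K[x]x^{f-1}` (inside `K(x)`),
`Fitt₁(I) = (R : ϱ(I)) = K[x²]x^{n-f} + K[x]x^{n-1}`, and `R/Fitt₁(I)` is isomorphic to
`K[x²]/(x^{n-f})` (written `K[u]/(u^{(n-f)/2})`). -/
theorem cusp_curve_fitting (K : Type*) [Field K] (n : ℕ) (hn : 3 ≤ n) (hodd : Odd n)
    (R : Subalgebra K (Polynomial K))
    (hR : R = Algebra.adjoin K {(Polynomial.X : Polynomial K) ^ 2, Polynomial.X ^ n})
    (I : Ideal R) (hI : I ≠ ⊥)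
    (a b : R) (hab : I = Ideal.span {a, b})
    (f : ℕ) (hfpos : 0 < f) (hfodd : Odd f)
    (hfI : ∀ y : R, y ∈ I → ∃ z : R, z ∈ I ∧
      (z : Polynomial K) = Polynomial.X ^ f * (y : Polynomial K))
    (hfmin : ∀ g : ℕ, 0 < g → Odd g →
      (∀ y : R, y ∈ I → ∃ z : R, z ∈ I ∧
        (z : Polynomial K) = Polynomial.X ^ g * (y : Polynomial K)) → f ≤ g) :
    (∀ g : RatFunc K,
      (∀ y : R, y ∈ I → ∃ z : R, z ∈ I ∧
          g * algebraMap (Polynomial K) (RatFunc K) (y : Polynomial K) =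
            algebraMap (Polynomial K) (RatFunc K) (z : Polynomial K)) ↔
        ∃ p q : Polynomial K, g = algebraMap (Polynomial K) (RatFunc K)
          (p.comp (Polynomial.X ^ 2) + Polynomial.X ^ (f - 1) * q)) ∧
    (∀ r : R, r ∈ relFittingIdeal a b ↔
      ∃ p q : Polynomial K, (r : Polynomial K) =
        Polynomial.X ^ (n - f) * p.comp (Polynomial.X ^ 2) +
          Polynomial.X ^ (n - 1) * q) ∧
    (∀ r : R, r ∈ relFittingIdeal a b ↔
      ∀ g : RatFunc K,
        (∀ y : R, y ∈ I → ∃ z : R, z ∈ I ∧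
            g * algebraMap (Polynomial K) (RatFunc K) (y : Polynomial K) =
              algebraMap (Polynomial K) (RatFunc K) (z : Polynomial K)) →
        ∃ s : R, g * algebraMap (Polynomial K) (RatFunc K) (r : Polynomial K) =
          algebraMap (Polynomial K) (RatFunc K) (s : Polynomial K)) ∧
    Nonempty ((R ⧸ relFittingIdeal a b) ≃+*
      (Polynomial K ⧸ Ideal.span {(Polynomial.X : Polynomial K) ^ ((n - f) / 2)})) :=
  cusp_curve_fitting_general K n hodd R hR I hI a b hab f hfodd hfI hfmin
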